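/- arXiv:2102.10088 — 4 statements merged into one kernel-verified Lean document; each statement's English description precedes it below -/
import Mathlib

section
/- Let (I_k)_{k=0}^∞ be a branch of dyadic intervals (I_0 = ∅, I_1 = [0,1), and each I_{k+1} is a half of I_k) with associated signs (θ_k), and let (a_k)_{k=0}^n be scalars. Then the L_1-norm of Σ_{k=0}^n a_k θ_k |I_k|^{-1} h_{I_k} is at most Σ_{k=1}^n |a_k - a_{k-1}| + |a_n|. -/
open MeasureTheory Filter Set
open scoped ENNReal

noncomputable section
open Classical

/-- The dyadic interval of level `n` and position `i`. -/
def dyI (n i : ℕ) : Set ℝ := Set.Ico ((i : ℝ) / 2 ^ n) ((i + 1 : ℝ) / 2 ^ n)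

/-- The Haar function of the dyadic interval of level `n`, position `i`. -/
def haarFn (n i : ℕ) : ℝ → ℝ := fun x =>
  if x ∈ dyI (n + 1) (2 * i) then 1 else if x ∈ dyI (n + 1) (2 * i + 1) then -1 else 0

/-- Indexing of `D⁺`: `none` is the "empty" index `∅`, `some (n, i)` a dyadic interval. -/
def haarP : Option (ℕ × ℕ) → ℝ → ℝ
  | none => (Set.Ico (0 : ℝ) 1).indicator 1
  | some (n, i) => haarFn n i

/-- The interval supporting a given index of `D⁺` (with the convention that `∅` is
supported on `[0,1)`). -/
def suppI : Option (ℕ × ℕ) → Set ℝ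
  | none => Set.Ico (0 : ℝ) 1
  | some p => dyI p.1 p.2

def lenI : Option (ℕ × ℕ) → ℝ
  | none => 1
  | some (n, _i) => 1 / 2 ^ n

def validIdx : Option (ℕ × ℕ) → Prop
  | none => True
  | some (n, i) => i < 2 ^ n

/-- The position of the `k`-th member of a branch determined by signs `θ`
(`θ k = true` means the branch turns to the left half at step `k`). -/
def branchPos (θ : ℕ → Bool) : ℕ → ℕ
  | 0 => 0
  | 1 => 0
  | k + 2 => 2 * branchPos θ (k + 1) + (if θ (k + 1) then 0 else 1)

/-- The `k`-th member `I_k` of the branch determined by `θ`, as an index in `D⁺`. -/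
def branchI (θ : ℕ → Bool) (k : ℕ) : Option (ℕ × ℕ) :=
  if k = 0 then none else some (k - 1, branchPos θ k)

/-- The sign `θ_k`, with the convention `θ_0 = 1`. -/
def branchSgn (θ : ℕ → Bool) (k : ℕ) : ℝ :=
  if k = 0 then 1 else if θ k then 1 else -1

/-- The weight `|I_k|⁻¹`, with the convention `|I_0|⁻¹ = |∅|⁻¹ = 1`. -/
def branchWt (k : ℕ) : ℝ := if k = 0 then 1 else 2 ^ (k - 1)

/-- `B_k = I_k \ I_{k+1}`. -/
def branchB (θ : ℕ → Bool) (k : ℕ) : Set ℝ := suppI (branchI θ k) \ suppI (branchI θ (k + 1))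


/-- Lebesgue measure restricted to `[0,1)`. -/
def mu01 : Measure ℝ := volume.restrict (Set.Ico 0 1)

lemma mu01_ne_top (s : Set ℝ) : mu01 s ≠ ⊤ := by
  refine ne_top_of_le_ne_top ?_ (measure_mono (Set.subset_univ s))
  have : mu01 Set.univ = volume (Set.Ico (0:ℝ) 1) := by
    simp [mu01]
  rw [this, Real.volume_Ico]
  exact ENNReal.ofReal_ne_top

/-- indicator of a measurable set, as an element of `L₁[0,1)`. -/
def indL1 (s : Set ℝ) (hs : MeasurableSet s) : Lp ℝ 1 mu01 :=
  indicatorConstLp 1 hs (mu01_ne_top s) (1 : ℝ)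

/-- The Haar system as elements of `L₁[0,1)`, indexed by `D⁺`. -/
def haarL1 : Option (ℕ × ℕ) → Lp ℝ 1 mu01
  | none => indL1 (Set.Ico (0 : ℝ) 1) measurableSet_Ico
  | some (n, i) => indL1 (dyI (n + 1) (2 * i)) measurableSet_Ico
      - indL1 (dyI (n + 1) (2 * i + 1)) measurableSet_Ico

section Tensor

variable {X : Type*} [NormedAddCommGroup X] [NormedSpace ℝ X]

/-- the elementary tensor `f ⊗ x` as an element of the Bochner space `L₁([0,1); X)`. -/
def tensorL1 (f : Lp ℝ 1 mu01) (x : X) : Lp X 1 mu01 :=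
  ((L1.integrable_coeFn f).smul_const x).toL1 _

/-- For an operator `T` on `L₁(X)`, a functional `g ∈ X*` and a vector `x ∈ X`, the operator
`T^{(g,x)} : L₁ → L₁` defined by `⟨e*, T^{(g,x)} e⟩ = ⟨e* ⊗ g, T (e ⊗ x)⟩`; concretely
`T^{(g,x)} e = (s ↦ g ((T (e ⊗ x)) s))`. -/
def entryFun (T : Lp X 1 mu01 →L[ℝ] Lp X 1 mu01) (g : X →L[ℝ] ℝ) (x : X)
    (f : Lp ℝ 1 mu01) : Lp ℝ 1 mu01 :=
  (g.integrable_comp (L1.integrable_coeFn (T (tensorL1 f x)))).toL1 _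

end Tensor

/-- the linear span `Z` of the indicators of dyadic intervals. -/
def dyadicSpan : Submodule ℝ (ℝ → ℝ) :=
  Submodule.span ℝ {f | ∃ n i, i < 2 ^ n ∧ f = (dyI n i).indicator 1}

/-- A Haar system space norm: a norm on the span `Z` of the dyadic indicators which is
invariant under equidistribution and gives `χ_{[0,1)}` norm one.  The corresponding Haar
system space is the completion of `Z` under this norm. -/
structure HaarSystemNorm where
  N : (ℝ → ℝ) → ℝ
  nonneg : ∀ f, 0 ≤ N f
  add_le : ∀ f g, f ∈ dyadicSpan → g ∈ dyadicSpan → N (f + g) ≤ N f + N g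
  smul_eq : ∀ (c : ℝ) f, f ∈ dyadicSpan → N (c • f) = |c| * N f
  eq_zero : ∀ f, f ∈ dyadicSpan → N f = 0 → f = 0
  distrib_inv : ∀ f g, f ∈ dyadicSpan → g ∈ dyadicSpan →
    (∀ t : ℝ, volume {x | t < |f x|} = volume {x | t < |g x|}) → N f = N g
  norm_one : N ((Set.Ico (0 : ℝ) 1).indicator 1) = 1

/-- A realization of the Haar system space determined by a Haar system norm:
a Banach space `X` together with a linear embedding `j` of the span of the dyadic
indicators, which is isometric on the span and has dense range. -/
structure HaarSystemSpace (X : Type*) [NormedAddCommGroup X] [NormedSpace ℝ X] where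
  hn : HaarSystemNorm
  j : (ℝ → ℝ) →ₗ[ℝ] X
  norm_j : ∀ f ∈ dyadicSpan, ‖j f‖ = hn.N f
  dense_j : DenseRange (fun f : dyadicSpan => j f)

/-- the `X`-normalized Haar system `μ_L h_L` in a Haar system space. -/
def HaarSystemSpace.e {X : Type*} [NormedAddCommGroup X] [NormedSpace ℝ X]
    (H : HaarSystemSpace X) (L : Option (ℕ × ℕ)) : X :=
  ‖H.j ((suppI L).indicator 1)‖⁻¹ • H.j (haarP L)

section Factors

variable {X : Type*} [NormedAddCommGroup X] [NormedSpace ℝ X]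

/-- `T` is a `C`-factor of `S` with error `ε`. -/
def IsFactor (C ε : ℝ) (T S : X →L[ℝ] X) : Prop :=
  ∃ A B : X →L[ℝ] X, ‖B.comp (T.comp A) - S‖ ≤ ε ∧ ‖A‖ * ‖B‖ ≤ C

/-- `T` is a `C`-projectional factor of `S` with error `ε`: here `A : X → Y ⊆ X` is the
isomorphism onto a complemented subspace and `B = A⁻¹P` where `P` is the projection,
so that `B ∘ A = Id`. -/
def IsProjFactor (C ε : ℝ) (T S : X →L[ℝ] X) : Prop :=
  ∃ A B : X →L[ℝ] X, B.comp A = ContinuousLinearMap.id ℝ X ∧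
    ‖B.comp (T.comp A) - S‖ ≤ ε ∧ ‖A‖ * ‖B‖ ≤ C

end Factors

/-- the `n`-th Rademacher function `r_n = ∑_{L ∈ D_n} h_L`. -/
def rademacherFn (n : ℕ) : ℝ → ℝ := fun x => ∑ i ∈ Finset.range (2 ^ n), haarFn n i x

/-- Enumeration of the Haar system in the usual linear order `ι`
(`haarEnum 1 = h_∅`, `haarEnum 2 = h_{[0,1)}`, then level by level). -/
def haarEnum : ℕ → ℝ → ℝ := fun m =>
  if m ≤ 1 then (Set.Ico (0 : ℝ) 1).indicator 1
  else haarFn (Nat.log 2 (m - 1)) (m - 2 ^ Nat.log 2 (m - 1) - 1)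

/-- extraction of binary digits: `digitsFn x k` records whether the `k`-th digit of `x`
is `0`, i.e. whether the branch through `x` turns left at step `k`. -/
def digitsFn (x : ℝ) : ℕ → Bool := fun k => decide (⌊x * 2 ^ k⌋ % 2 = 0)

/-- the coin-tossing measure on the space of branches `[D⁺] ≃ {-1,1}^ℕ`, realized as the
image of Lebesgue measure on `[0,1)` under the binary-digit identification. -/
def muBr : Measure (ℕ → Bool) := Measure.map digitsFn mu01

/-- `h_Γ^θ = ∑_{J ∈ Γ} θ_J h_J` for a finite collection `Γ` of dyadic intervals. -/
def hGamma (Γ : Finset (ℕ × ℕ)) (θ : ℕ × ℕ → Bool) : ℝ → ℝ :=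
  fun x => ∑ J ∈ Γ, (if θ J then (1:ℝ) else -1) * haarFn J.1 J.2 x

/-- `Γ* = ∪ {I : I ∈ Γ}`. -/
def GammaStar (Γ : Finset (ℕ × ℕ)) : Set ℝ := ⋃ J ∈ Γ, dyI J.1 J.2

/-- `|Γ*|`, the total length of a disjoint finite collection of dyadic intervals. -/
def lenGamma (Γ : Finset (ℕ × ℕ)) : ℝ := ∑ J ∈ Γ, (1 : ℝ) / 2 ^ J.1


/-!
The partial sums `∑_{k ≤ j} θ_k |I_k|⁻¹ h_{I_k}` telescope to `|I_{j+1}|⁻¹ χ_{I_{j+1}}`, a function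
of `L₁`-norm one: adding `θ_k h_{I_k}` to `χ_{I_k}` doubles it on the half `I_{k+1}` selected by
`θ_k` and kills it on the other half. Summation by parts writes `∑ a_k θ_k |I_k|⁻¹ h_{I_k}` as
`a_n` times the last partial sum minus `∑ (a_{k+1} - a_k)` times the earlier ones, and the
triangle inequality in `L₁` gives the bound.
-/

lemma dyI_succ_union (n i : ℕ) : dyI (n + 1) (2 * i) ∪ dyI (n + 1) (2 * i + 1) = dyI n i := by
  have hl : (2 * i : ℝ) / 2 ^ (n + 1) = i / 2 ^ n := by field_simp; ring
  have hr : (2 * i + 1 + 1 : ℝ) / 2 ^ (n + 1) = (i + 1) / 2 ^ n := by field_simp; ring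
  simp only [dyI, Nat.cast_mul, Nat.cast_ofNat, Nat.cast_add, Nat.cast_one, hl, hr]
  exact Set.Ico_union_Ico_eq_Ico (by rw [← hl]; gcongr; linarith)
    (by rw [← hr]; gcongr; linarith)

lemma disjoint_dyI_succ (n i : ℕ) : Disjoint (dyI (n + 1) (2 * i)) (dyI (n + 1) (2 * i + 1)) := by
  simp only [dyI, Nat.cast_mul, Nat.cast_ofNat, Nat.cast_add, Nat.cast_one]
  exact Set.Ico_disjoint_Ico_same

lemma indicator_dyI_add_haarFn (n i : ℕ) (x : ℝ) :
    (dyI n i).indicator 1 x + haarFn n i x = 2 * (dyI (n + 1) (2 * i)).indicator 1 x := by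
  rw [← dyI_succ_union, haarFn]
  by_cases hl : x ∈ dyI (n + 1) (2 * i)
  · norm_num [hl]
  · by_cases hr : x ∈ dyI (n + 1) (2 * i + 1) <;> simp [hl, hr]

lemma indicator_dyI_sub_haarFn (n i : ℕ) (x : ℝ) :
    (dyI n i).indicator 1 x - haarFn n i x = 2 * (dyI (n + 1) (2 * i + 1)).indicator 1 x := by
  have hdisj := Set.disjoint_left.1 (disjoint_dyI_succ n i)
  rw [← dyI_succ_union, haarFn]
  by_cases hl : x ∈ dyI (n + 1) (2 * i)
  · simp [hl, hdisj hl]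
  · by_cases hr : x ∈ dyI (n + 1) (2 * i + 1) <;> simp [hl, hr]; norm_num

lemma sum_branch_haar_eq_indicator (θ : ℕ → Bool) (j : ℕ) (x : ℝ) :
    ∑ k ∈ Finset.range (j + 1), branchSgn θ k * branchWt k * haarP (branchI θ k) x
      = 2 ^ j * (dyI j (branchPos θ (j + 1))).indicator 1 x := by
  induction j with
  | zero => simp [branchSgn, branchWt, branchI, haarP, branchPos, dyI]
  | succ j ih =>
    have hpos : branchPos θ (j + 2) = 2 * branchPos θ (j + 1) + if θ (j + 1) then 0 else 1 := rfl
    rw [Finset.sum_range_succ, ih, hpos]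
    simp only [branchSgn, branchWt, branchI, haarP, Nat.add_one_ne_zero, if_false,
      Nat.add_sub_cancel]
    cases θ (j + 1) <;> simp only [Bool.false_eq_true, if_true, if_false, add_zero]
    · linear_combination (2 : ℝ) ^ j * indicator_dyI_sub_haarFn j (branchPos θ (j + 1)) x
    · linear_combination (2 : ℝ) ^ j * indicator_dyI_add_haarFn j (branchPos θ (j + 1)) x

lemma integrable_indicator_dyI (n i : ℕ) : Integrable ((dyI n i).indicator (1 : ℝ → ℝ)) :=
  (integrable_indicator_iff measurableSet_Ico).2 (integrableOn_const measure_Ico_lt_top.ne)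

lemma integral_abs_mul_indicator_dyI (c : ℝ) (n i : ℕ) :
    ∫ x, |c * (2 ^ n * (dyI n i).indicator 1 x)| = |c| := by
  have habs : ∀ x, |c * (2 ^ n * (dyI n i).indicator 1 x)|
      = |c| * 2 ^ n * (dyI n i).indicator 1 x := fun x => by
    by_cases hx : x ∈ dyI n i <;> simp [hx, abs_mul]
  simp_rw [habs]
  have hvol : volume.real (dyI n i) = 1 / 2 ^ n := by
    rw [measureReal_def, dyI, Real.volume_Ico, ← sub_div, add_sub_cancel_left,
      ENNReal.toReal_ofReal (by positivity)]
  rw [integral_const_mul, integral_indicator_one (s := dyI n i) measurableSet_Ico, hvol]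
  field_simp

section IntegralAbs

variable {α : Type*} [MeasurableSpace α] {μ : Measure α}

lemma integral_abs_sub_le {f g : α → ℝ} (hf : Integrable f μ) (hg : Integrable g μ) :
    ∫ x, |f x - g x| ∂μ ≤ (∫ x, |f x| ∂μ) + ∫ x, |g x| ∂μ := by
  rw [← integral_add hf.abs hg.abs]
  exact integral_mono (hf.sub hg).abs (hf.abs.add hg.abs) fun x => abs_sub _ _

lemma integral_abs_sum_le {ι : Type*} (s : Finset ι) {F : ι → α → ℝ}
    (hF : ∀ i ∈ s, Integrable (F i) μ) :
    ∫ x, |∑ i ∈ s, F i x| ∂μ ≤ ∑ i ∈ s, ∫ x, |F i x| ∂μ := by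
  rw [← integral_finsetSum s fun i hi => (hF i hi).abs]
  exact integral_mono (integrable_finsetSum s hF).abs
    (integrable_finsetSum s fun i hi => (hF i hi).abs) fun x => Finset.abs_sum_le_sum_abs _ _

end IntegralAbs

lemma sum_Icc_abs_sub_pred (a : ℕ → ℝ) (n : ℕ) :
    ∑ k ∈ Finset.Icc 1 n, |a k - a (k - 1)| = ∑ i ∈ Finset.range n, |a (i + 1) - a i| := by
  rw [← Finset.Ico_add_one_right_eq_Icc, Finset.sum_Ico_eq_sum_range]
  simp only [Nat.add_sub_cancel, add_comm 1]

theorem statement1 (θ : ℕ → Bool) (a : ℕ → ℝ) (n : ℕ) :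
    (∫ x, |∑ k ∈ Finset.range (n + 1),
        a k * branchSgn θ k * branchWt k * haarP (branchI θ k) x|) ≤
      (∑ k ∈ Finset.Icc 1 n, |a k - a (k - 1)|) + |a n| := by
  set P : ℕ → ℝ → ℝ := fun j x => 2 ^ j * (dyI j (branchPos θ (j + 1))).indicator 1 x
  have hP : ∀ j, Integrable (P j) := fun j => (integrable_indicator_dyI _ _).const_mul _
  have hparts : ∀ x, ∑ k ∈ Finset.range (n + 1),
      a k * branchSgn θ k * branchWt k * haarP (branchI θ k) x
        = a n * P n x - ∑ i ∈ Finset.range n, (a (i + 1) - a i) * P i x := fun x => by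
    have h := Finset.sum_range_by_parts a
      (fun k => branchSgn θ k * branchWt k * haarP (branchI θ k) x) (n + 1)
    simp only [smul_eq_mul, Nat.add_sub_cancel, sum_branch_haar_eq_indicator] at h
    rw [← h]
    exact Finset.sum_congr rfl fun k _ => by ring
  simp_rw [hparts]
  calc ∫ x, |a n * P n x - ∑ i ∈ Finset.range n, (a (i + 1) - a i) * P i x|
      ≤ (∫ x, |a n * P n x|) + ∫ x, |∑ i ∈ Finset.range n, (a (i + 1) - a i) * P i x| :=
        integral_abs_sub_le ((hP n).const_mul (a n))
          (integrable_finsetSum (Finset.range n) fun i _ => (hP i).const_mul (a (i + 1) - a i))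
    _ ≤ |a n| + ∑ i ∈ Finset.range n, |a (i + 1) - a i| := by
        gcongr
        · exact (integral_abs_mul_indicator_dyI _ _ _).le
        · refine (integral_abs_sum_le _ fun i _ => (hP i).const_mul (a (i + 1) - a i)).trans_eq ?_
          exact Finset.sum_congr rfl fun i _ => integral_abs_mul_indicator_dyI _ _ _
    _ = (∑ k ∈ Finset.Icc 1 n, |a k - a (k - 1)|) + |a n| := by
        rw [sum_Icc_abs_sub_pred, add_comm]

end
end

section
/- Let (ξ_n)_n be a bounded sequence in ℓ_1 and ε > 0. Then there exists an infinite set N = {n_1 < n_2 < ...} ⊆ ℕ such that for every j_0, Σ_{j ≠ j_0} |ξ_{n_{j_0}}(n_j)| ≤ ε. -/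
open MeasureTheory Filter Set
open scoped ENNReal

noncomputable section
open Classical

/-!
Bounded sets of `ℓ₁` are relatively compact for the coordinatewise topology, so a subsequence
converges coordinatewise to some `a ∈ ℓ₁`. Reading its coordinates along the same subsequence gives
a matrix with summable rows whose columns converge to a summable sequence. After subtracting
the limit, the columns tend to `0`, and the rows can be picked one at a time: each new row is
small on all earlier columns and lies beyond the small tails of all earlier rows. The limit itself
contributes little once all indices lie beyond one of its small tails.
-/

open Topology

section TailSums

variable {f : ℕ → ℝ}

theorem Summable.tsum_subtype_ne_eq (hf : Summable f) (k : ℕ) :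
    ∑' j : {j : ℕ // j ≠ k}, f j = ∑ j ∈ Finset.range k, f j + ∑' j, f (j + (k + 1)) := by
  have hsplit := hf.sum_add_tsum_nat_add (k + 1)
  rw [Finset.sum_range_succ, hf.tsum_eq_add_tsum_ite k] at hsplit
  change ∑' j : ({j | j ≠ k} : Set ℕ), f j = _
  rw [tsum_subtype]
  simp only [Set.indicator_apply, Set.mem_ofPred_eq, ite_not] at hsplit ⊢
  linarith

theorem tsum_comp_le_tsum_nat_add (hf0 : 0 ≤ f) (hf : Summable f) {ι : Type*} {e : ι → ℕ}
    (he : Function.Injective e) {T : ℕ} (hT : ∀ i, T ≤ e i) :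
    ∑' i, f (e i) ≤ ∑' m, f (m + T) :=
  (hf.comp_injective he).tsum_le_tsum_of_inj (fun i => e i - T)
    (fun i j hij => he (by dsimp only at hij; have := hT i; have := hT j; omega))
    (fun _ _ => hf0 _)
    (fun i => (congrArg f (Nat.sub_add_cancel (hT i))).ge) ((summable_nat_add_iff T).2 hf)

theorem sum_range_comp_le_sum_range (hf0 : 0 ≤ f) {ψ : ℕ → ℕ} (hψ : StrictMono ψ) (i : ℕ) :
    ∑ j ∈ Finset.range (i + 1), f (ψ j) ≤ ∑ r ∈ Finset.range (ψ i + 1), f r := by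
  rw [← Finset.sum_image hψ.injective.injOn]
  refine Finset.sum_le_sum_of_subset_of_nonneg (fun r hr => ?_) fun _ _ _ => hf0 _
  obtain ⟨j, hj, rfl⟩ := Finset.mem_image.mp hr
  exact Finset.mem_range.mpr
    (Nat.lt_succ_of_le (hψ.monotone (Nat.le_of_lt_succ (Finset.mem_range.mp hj))))

end TailSums

theorem exists_strictMono_tsum_offDiag_le_of_tendsto_zero {A : ℕ → ℕ → ℝ}
    (hrow : ∀ q, Summable fun r => |A q r|) (hcol : ∀ r, Tendsto (fun q => A q r) atTop (𝓝 0))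
    {δ : ℝ} (hδ : 0 < δ) (N : ℕ) :
    ∃ ψ : ℕ → ℕ, StrictMono ψ ∧ (∀ j, N ≤ ψ j) ∧
      ∀ k, ∑' j : {j : ℕ // j ≠ k}, |A (ψ k) (ψ j)| ≤ δ := by
  -- Row `ψ (k + 1)` is chosen small on the columns up to `ψ k` and beyond the `δ / 2`-tail of
  -- row `ψ k`; so in row `ψ k` the earlier columns and the later ones each contribute `≤ δ / 2`.
  have hnext : ∀ p, ∃ q, p < q ∧ ∑' m, |A p (m + q)| ≤ δ / 2 ∧
      ∑ r ∈ Finset.range (p + 1), |A q r| ≤ δ / 2 := by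
    intro p
    have htail := (tendsto_sum_nat_add fun m => |A p m|).eventually
      (eventually_le_nhds (half_pos hδ))
    have hhead : Tendsto (fun q => ∑ r ∈ Finset.range (p + 1), |A q r|) atTop (𝓝 0) := by
      simpa using tendsto_finsetSum _ fun r _ => (hcol r).abs
    exact ((eventually_gt_atTop p).and
      (htail.and (hhead.eventually (eventually_le_nhds (half_pos hδ))))).exists
  choose next hlt htail hhead using hnext
  set ψ : ℕ → ℕ := fun k => next^[k] N
  have hψ_succ : ∀ k, ψ (k + 1) = next (ψ k) := fun k => Function.iterate_succ_apply' next k N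
  have hψ : StrictMono ψ := strictMono_nat_of_lt_succ fun k => hψ_succ k ▸ hlt _
  refine ⟨ψ, hψ, fun j => hψ.monotone (Nat.zero_le j), fun k => ?_⟩
  have habs : 0 ≤ fun r => |A (ψ k) r| := fun _ => abs_nonneg _
  have hpast : ∑ j ∈ Finset.range k, |A (ψ k) (ψ j)| ≤ δ / 2 := by
    cases k with
    | zero => simpa using (half_pos hδ).le
    | succ i =>
      rw [hψ_succ]
      exact (sum_range_comp_le_sum_range (fun _ => abs_nonneg _) hψ i).trans (hhead _)
  have hfuture : ∑' j, |A (ψ k) (ψ (j + (k + 1)))| ≤ δ / 2 := by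
    refine (tsum_comp_le_tsum_nat_add (e := fun j => ψ (j + (k + 1))) habs (hrow _)
      (hψ.injective.comp (add_left_injective (k + 1)))
      fun j => hψ.monotone (Nat.le_add_left _ j)).trans ?_
    rw [hψ_succ]
    exact htail _
  rw [Summable.tsum_subtype_ne_eq (f := fun j => |A (ψ k) (ψ j)|)
    ((hrow _).comp_injective hψ.injective) k]
  linarith

theorem exists_strictMono_tsum_offDiag_le {A : ℕ → ℕ → ℝ} {b : ℕ → ℝ}
    (hrow : ∀ q, Summable fun r => |A q r|) (hb : Summable fun r => |b r|)
    (hcol : ∀ r, Tendsto (fun q => A q r) atTop (𝓝 (b r))) {ε : ℝ} (hε : 0 < ε) :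
    ∃ ψ : ℕ → ℕ, StrictMono ψ ∧ ∀ k, ∑' j : {j : ℕ // j ≠ k}, |A (ψ k) (ψ j)| ≤ ε := by
  obtain ⟨N, hN⟩ := ((tendsto_sum_nat_add fun m => |b m|).eventually
    (eventually_le_nhds (half_pos hε))).exists
  have hrow' : ∀ q, Summable fun r => |A q r - b r| := fun q =>
    ((hrow q).add hb).of_nonneg_of_le (fun _ => abs_nonneg _) fun r => abs_sub _ _
  obtain ⟨ψ, hψ, hNψ, hoff⟩ := exists_strictMono_tsum_offDiag_le_of_tendsto_zero hrow'
    (fun r => by simpa using (hcol r).sub_const (b r)) (half_pos hε) N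
  refine ⟨ψ, hψ, fun k => ?_⟩
  have hsub : ∀ {g : ℕ → ℝ}, Summable g → Summable fun j : {j : ℕ // j ≠ k} => g (ψ j) :=
    fun hg => (hg.comp_injective hψ.injective).comp_injective Subtype.val_injective
  have hbpart : ∑' j : {j : ℕ // j ≠ k}, |b (ψ j)| ≤ ε / 2 :=
    (tsum_comp_le_tsum_nat_add (fun _ => abs_nonneg _) hb
      (hψ.injective.comp Subtype.val_injective) fun j => hNψ j).trans hN
  have hAsub : Summable fun j : {j : ℕ // j ≠ k} => |A (ψ k) (ψ j) - b (ψ j)| :=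
    hsub (hrow' _)
  calc ∑' j : {j : ℕ // j ≠ k}, |A (ψ k) (ψ j)|
      ≤ ∑' j : {j : ℕ // j ≠ k}, (|A (ψ k) (ψ j) - b (ψ j)| + |b (ψ j)|) :=
        (hsub (hrow _)).tsum_le_tsum (fun j => sub_le_iff_le_add.mp (abs_sub_abs_le_abs_sub _ _))
          (hAsub.add (hsub hb))
    _ = ∑' j : {j : ℕ // j ≠ k}, |A (ψ k) (ψ j) - b (ψ j)|
        + ∑' j : {j : ℕ // j ≠ k}, |b (ψ j)| :=
        hAsub.tsum_add (hsub hb)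
    _ ≤ ε / 2 + ε / 2 := add_le_add (hoff k) hbpart
    _ = ε := add_halves ε

theorem lp.exists_subseq_tendsto_coe {ι E : Type*} [Countable ι] [NormedAddCommGroup E]
    [ProperSpace E] {p : ℝ≥0∞} [Fact (1 ≤ p)] (ξ : ℕ → lp (fun _ : ι => E) p) {M : ℝ}
    (hM : ∀ n, ‖ξ n‖ ≤ M) :
    ∃ a : ι → E, Memℓp a p ∧ ∃ φ : ℕ → ℕ, StrictMono φ ∧
      Tendsto (fun k => (ξ (φ k) : ι → E)) atTop (𝓝 a) := by
  have hp : p ≠ 0 := (zero_lt_one.trans_le Fact.out).ne'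
  obtain ⟨a, -, φ, hφ, hlim⟩ :=
    (isCompact_univ_pi fun _ : ι => isCompact_closedBall (0 : E) M).tendsto_subseq
      (x := fun n => (ξ n : ι → E)) fun n i _ =>
        mem_closedBall_zero_iff.mpr ((lp.norm_apply_le_norm hp _ i).trans (hM n))
  refine ⟨a, lp.memℓp_of_tendsto (F := fun k => ξ (φ k)) ?_ hlim, φ, hφ, hlim⟩
  exact isBounded_iff_forall_norm_le.mpr ⟨M, by rintro _ ⟨k, rfl⟩; exact hM _⟩

theorem statement8 (ξ : ℕ → lp (fun _ : ℕ => ℝ) 1) (hb : ∃ M, ∀ n, ‖ξ n‖ ≤ M)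
    (ε : ℝ) (hε : 0 < ε) :
    ∃ n : ℕ → ℕ, StrictMono n ∧
      ∀ j0 : ℕ, ∑' j : {j : ℕ // j ≠ j0}, |(ξ (n j0) : ∀ _ : ℕ, ℝ) (n j.1)| ≤ ε := by
  obtain ⟨M, hM⟩ := hb
  obtain ⟨a, ha, φ, hφ, hlim⟩ := lp.exists_subseq_tendsto_coe ξ hM
  have hsum : ∀ x : ℕ → ℝ, Memℓp x 1 → Summable fun m => |x m| := fun x hx => by
    simpa using hx.summable (by norm_num)
  obtain ⟨ψ, hψ, hoff⟩ := exists_strictMono_tsum_offDiag_le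
    (A := fun q r => (ξ (φ q) : ℕ → ℝ) (φ r)) (b := fun r => a (φ r))
    (fun q => (hsum _ (lp.memℓp _)).comp_injective hφ.injective)
    ((hsum a ha).comp_injective hφ.injective) (fun r => tendsto_pi_nhds.mp hlim (φ r)) hε
  exact ⟨φ ∘ ψ, hφ.comp hψ, hoff⟩

end
end

section
/- Let K be a relatively compact subset of a Banach space. For every ε > 0 and η > 0 there is N(K, ε, η) ∈ ℕ such that for every N ≥ N(K, ε, η), every uniform probability space Ω of 2N points partitioned into doubletons {ω_n^{-1}, ω_n^1}, and every G : Ω → K, the map Φ : {−1,1}^N → conv(K) defined by Φ(ε) = (1/N) Σ_{n=1}^N G(ω_n^{ε_n}) satisfies E(Φ) = E(G) and P(‖Φ − E(G)‖ ≥ η) ≤ ε. -/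
open MeasureTheory Filter Set
open scoped ENNReal

noncomputable section
open Classical

/-!
Put `vₙ = (G (n, true) - G (n, false)) / 2`. Then `Φ e - E G = N⁻¹ ∑ₙ ±vₙ` with independent
uniform signs, a Rademacher average of vectors from the relatively compact set `(K - K) / 2`.
Replacing each `vₙ` by a point of a finite `η/2`-net `W` of that set moves the average by at most
`η/2`; grouping the indices by their net point turns the sum into `∑_{w ∈ W} S_w • w` with scalar
Rademacher sums `S_w` over disjoint index sets. Orthogonality of the signs gives
`E ‖∑ₙ ±wₙ‖² ≤ #W (∑_{w ∈ W} ‖w‖²) N`, and Chebyshev's inequality bounds the probability of a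
deviation `≥ η` by `4 #W (∑_{w ∈ W} ‖w‖²) / (N η²)`, which is at most `ε` once `N` is large.
-/

open Finset

def boolSign (b : Bool) : ℝ := if b then 1 else -1

@[simp] lemma boolSign_true : boolSign true = 1 := rfl

@[simp] lemma boolSign_false : boolSign false = -1 := rfl

@[simp] lemma boolSign_not (b : Bool) : boolSign (!b) = -boolSign b := by
  cases b <;> simp

@[simp] lemma boolSign_mul_self (b : Bool) : boolSign b * boolSign b = 1 := by
  cases b <;> norm_num

@[simp] lemma abs_boolSign (b : Bool) : |boolSign b| = 1 := by
  cases b <;> simp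

lemma apply_eq_midpoint_add_boolSign_smul {E : Type*} [AddCommGroup E] [Module ℝ E]
    (f : Bool → E) (b : Bool) :
    f b = (2 : ℝ)⁻¹ • (f true + f false) + boolSign b • (2 : ℝ)⁻¹ • (f true - f false) := by
  cases b <;> simp only [boolSign_true, boolSign_false] <;> module

section ScalarRademacherSums

variable {ι : Type*} [DecidableEq ι]

def flipAt (i : ι) : Equiv.Perm (ι → Bool) :=
  Function.Involutive.toPerm (fun e => Function.update e i (!e i)) fun e => by simp

lemma flipAt_apply_self (i : ι) (e : ι → Bool) : flipAt i e i = !e i :=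
  Function.update_self ..

lemma flipAt_apply_of_ne {i j : ι} (h : j ≠ i) (e : ι → Bool) :
    flipAt i e j = e j :=
  Function.update_of_ne h ..

variable [Fintype ι]

lemma sum_eq_zero_of_flipAt (i : ι) {f : (ι → Bool) → ℝ}
    (hf : ∀ e, f (flipAt i e) = -f e) : ∑ e, f e = 0 := by
  have h := Equiv.sum_comp (flipAt i) f
  simp only [hf, sum_neg_distrib] at h
  linarith

lemma sum_boolSign_apply (i : ι) : ∑ e : ι → Bool, boolSign (e i) = 0 :=
  sum_eq_zero_of_flipAt i fun e => by rw [flipAt_apply_self, boolSign_not]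

lemma sum_boolSign_apply_mul_boolSign_apply (i j : ι) :
    ∑ e : ι → Bool, boolSign (e i) * boolSign (e j) =
      if i = j then 2 ^ Fintype.card ι else 0 := by
  split_ifs with h
  · simp [h]
  · refine sum_eq_zero_of_flipAt i fun e => ?_
    rw [flipAt_apply_self, flipAt_apply_of_ne (Ne.symm h), boolSign_not, neg_mul]

lemma sum_sq_sum_boolSign_apply (A : Finset ι) :
    ∑ e : ι → Bool, (∑ i ∈ A, boolSign (e i)) ^ 2 = #A * 2 ^ Fintype.card ι := by
  simp_rw [sq, sum_mul_sum]
  rw [sum_comm]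
  simp_rw [sum_comm (s := (univ : Finset (ι → Bool))), sum_boolSign_apply_mul_boolSign_apply]
  simp

lemma sum_sum_boolSign_smul_eq_zero {E : Type*} [AddCommGroup E] [Module ℝ E] (v : ι → E) :
    ∑ e : ι → Bool, ∑ i, boolSign (e i) • v i = 0 := by
  rw [sum_comm]
  simp [← sum_smul, sum_boolSign_apply]

end ScalarRademacherSums

lemma card_filter_le_mul_sq_le_sum_sq {α : Type*} (s : Finset α) (f : α → ℝ) {t : ℝ}
    (ht : 0 ≤ t) : #{a ∈ s | t ≤ f a} * t ^ 2 ≤ ∑ a ∈ s, f a ^ 2 := by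
  calc (#{a ∈ s | t ≤ f a} : ℝ) * t ^ 2 = ∑ a ∈ s with t ≤ f a, t ^ 2 := by
        rw [sum_const, nsmul_eq_mul]
    _ ≤ ∑ a ∈ s with t ≤ f a, f a ^ 2 :=
        sum_le_sum fun a ha => pow_le_pow_left₀ ht (mem_filter.mp ha).2 2
    _ ≤ ∑ a ∈ s, f a ^ 2 :=
        sum_le_sum_of_subset_of_nonneg (filter_subset _ _) fun _ _ _ => sq_nonneg _

lemma norm_sum_sq_le_card_mul_sum_norm_sq {F α : Type*} [SeminormedAddCommGroup F]
    (s : Finset α) (x : α → F) : ‖∑ a ∈ s, x a‖ ^ 2 ≤ #s * ∑ a ∈ s, ‖x a‖ ^ 2 :=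
  (pow_le_pow_left₀ (norm_nonneg _) (norm_sum_le s x) 2).trans sq_sum_le_card_mul_sum_sq

section Normed

variable {E : Type*} [NormedAddCommGroup E] [NormedSpace ℝ E]

lemma inv_card_smul_sum_mem_convexHull {ι : Type*} [Fintype ι] [Nonempty ι] {s : Set E}
    {f : ι → E} (hf : ∀ i, f i ∈ s) : (Fintype.card ι : ℝ)⁻¹ • ∑ i, f i ∈ convexHull ℝ s := by
  have h := univ.centerMass_mem_convexHull (w := fun _ => (1 : ℝ)) (fun _ _ => zero_le_one)
    (by simp [Fintype.card_pos]) fun i _ => hf i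
  simpa [centerMass] using h

lemma exists_finset_forall_norm_half_smul_sub_sub_lt {K : Set E} (hK : IsCompact (closure K))
    {r : ℝ} (hr : 0 < r) :
    ∃ W : Finset E, ∀ x ∈ K, ∀ y ∈ K, ∃ w ∈ W, ‖(2 : ℝ)⁻¹ • (x - y) - w‖ < r := by
  have hD : IsCompact ((fun p : E × E => (2 : ℝ)⁻¹ • (p.1 - p.2)) '' closure K ×ˢ closure K) :=
    (hK.prod hK).image (by fun_prop)
  obtain ⟨W, -, hW⟩ := hD.elim_nhds_subcover (fun w => Metric.ball w r)
    fun w _ => Metric.ball_mem_nhds w hr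
  refine ⟨W, fun x hx y hy => ?_⟩
  obtain ⟨w, hw, hxw⟩ := Set.mem_iUnion₂.mp
    (hW ⟨(x, y), ⟨subset_closure hx, subset_closure hy⟩, rfl⟩)
  exact ⟨w, hw, by rwa [← dist_eq_norm]⟩

section VectorRademacherSums

variable {ι : Type*} [Fintype ι]

lemma sum_boolSign_smul_eq_sum_fiber [DecidableEq E] (W : Finset E) {v : ι → E}
    (hv : ∀ i, v i ∈ W) (e : ι → Bool) :
    ∑ i, boolSign (e i) • v i = ∑ w ∈ W, (∑ i with v i = w, boolSign (e i)) • w := by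
  rw [← sum_fiberwise_of_maps_to (fun i _ => hv i)]
  refine sum_congr rfl fun w _ => ?_
  rw [sum_smul]
  exact sum_congr rfl fun i hi => by rw [(mem_filter.mp hi).2]

lemma norm_sum_boolSign_smul_le_add {v w : ι → E} {r : ℝ} (h : ∀ i, ‖v i - w i‖ ≤ r)
    (e : ι → Bool) :
    ‖∑ i, boolSign (e i) • v i‖ ≤ ‖∑ i, boolSign (e i) • w i‖ + Fintype.card ι * r := by
  have hdiff : ‖∑ i, boolSign (e i) • (v i - w i)‖ ≤ Fintype.card ι * r := by
    refine (norm_sum_le _ _).trans ?_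
    simpa [norm_smul] using sum_le_card_nsmul univ _ r fun i _ => by simpa [norm_smul] using h i
  calc ‖∑ i, boolSign (e i) • v i‖
      = ‖∑ i, boolSign (e i) • w i + ∑ i, boolSign (e i) • (v i - w i)‖ := by
        simp [smul_sub]
    _ ≤ _ := (norm_add_le _ _).trans (by gcongr)

def halfDiff (G : ι × Bool → E) (i : ι) : E := (2 : ℝ)⁻¹ • (G (i, true) - G (i, false))

lemma sum_apply_eq_half_sum_add_sum_boolSign_smul (G : ι × Bool → E) (e : ι → Bool) :
    ∑ i, G (i, e i) = (2 : ℝ)⁻¹ • ∑ ω, G ω + ∑ i, boolSign (e i) • halfDiff G i := by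
  rw [Fintype.sum_prod_type, smul_sum, ← sum_add_distrib]
  refine sum_congr rfl fun i _ => ?_
  rw [Fintype.sum_bool]
  exact apply_eq_midpoint_add_boolSign_smul (fun b => G (i, b)) (e i)

lemma inv_card_smul_sum_apply_sub_eq (G : ι × Bool → E) (e : ι → Bool) :
    (Fintype.card ι : ℝ)⁻¹ • ∑ i, G (i, e i) - (2 * Fintype.card ι : ℝ)⁻¹ • ∑ ω, G ω =
      (Fintype.card ι : ℝ)⁻¹ • ∑ i, boolSign (e i) • halfDiff G i := by
  rw [sum_apply_eq_half_sum_add_sum_boolSign_smul G e, mul_inv]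
  module

variable [DecidableEq ι]

lemma sum_norm_sum_boolSign_smul_sq_le (W : Finset E) {v : ι → E} (hv : ∀ i, v i ∈ W) :
    ∑ e : ι → Bool, ‖∑ i, boolSign (e i) • v i‖ ^ 2 ≤
      #W * (∑ w ∈ W, ‖w‖ ^ 2) * Fintype.card ι * 2 ^ Fintype.card ι := by
  calc ∑ e : ι → Bool, ‖∑ i, boolSign (e i) • v i‖ ^ 2
      ≤ ∑ e : ι → Bool, #W * ∑ w ∈ W, ‖w‖ ^ 2 * (∑ i with v i = w, boolSign (e i)) ^ 2 := by
        refine sum_le_sum fun e _ => ?_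
        rw [sum_boolSign_smul_eq_sum_fiber W hv]
        refine (norm_sum_sq_le_card_mul_sum_norm_sq W _).trans_eq ?_
        simp only [norm_smul, mul_pow, Real.norm_eq_abs, sq_abs, mul_comm]
    _ = #W * ∑ w ∈ W, ‖w‖ ^ 2 * (#{i | v i = w} * 2 ^ Fintype.card ι) := by
        rw [← mul_sum, sum_comm]
        simp_rw [← mul_sum, sum_sq_sum_boolSign_apply]
    _ ≤ #W * ∑ w ∈ W, ‖w‖ ^ 2 * (Fintype.card ι * 2 ^ Fintype.card ι) := by
        gcongr
        exact_mod_cast card_le_univ _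
    _ = #W * (∑ w ∈ W, ‖w‖ ^ 2) * Fintype.card ι * 2 ^ Fintype.card ι := by
        rw [← sum_mul]; ring

lemma card_le_norm_sum_boolSign_smul_mul_sq_le (W : Finset E) {v : ι → E} {r t : ℝ}
    (hv : ∀ i, ∃ w ∈ W, ‖v i - w‖ ≤ r) (ht : 0 ≤ t) :
    #{e : ι → Bool | t + Fintype.card ι * r ≤ ‖∑ i, boolSign (e i) • v i‖} * t ^ 2 ≤
      #W * (∑ w ∈ W, ‖w‖ ^ 2) * Fintype.card ι * 2 ^ Fintype.card ι := by
  choose w hwW hvw using hv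
  have hbad (e : ι → Bool) (he : t + Fintype.card ι * r ≤ ‖∑ i, boolSign (e i) • v i‖) :
      t ≤ ‖∑ i, boolSign (e i) • w i‖ := by
    linarith [norm_sum_boolSign_smul_le_add hvw e]
  calc _ ≤ (#{e : ι → Bool | t ≤ ‖∑ i, boolSign (e i) • w i‖} : ℝ) * t ^ 2 := by
        gcongr ?_ * _
        exact_mod_cast Finset.card_le_card (monotone_filter_right _ fun e _ => hbad e)
    _ ≤ _ := card_filter_le_mul_sq_le_sum_sq _ _ ht
    _ ≤ _ := sum_norm_sum_boolSign_smul_sq_le W hwW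

lemma average_inv_card_smul_sum_apply (G : ι × Bool → E) :
    (2 ^ Fintype.card ι : ℝ)⁻¹ • ∑ e : ι → Bool, ((Fintype.card ι : ℝ)⁻¹ • ∑ i, G (i, e i)) =
      (2 * Fintype.card ι : ℝ)⁻¹ • ∑ ω, G ω := by
  simp_rw [← smul_sum, sum_apply_eq_half_sum_add_sum_boolSign_smul G, sum_add_distrib,
    sum_sum_boolSign_smul_eq_zero, add_zero, sum_const, card_univ, Fintype.card_fun,
    Fintype.card_bool, ← Nat.cast_smul_eq_nsmul ℝ, smul_smul]
  congr 1
  push_cast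
  field_simp

end VectorRademacherSums

end Normed

theorem statement10 {E : Type*} [NormedAddCommGroup E] [NormedSpace ℝ E]
    (K : Set E) (hK : IsCompact (closure K)) (ε η : ℝ) (hε : 0 < ε) (hη : 0 < η) :
    ∃ N0 : ℕ, 0 < N0 ∧ ∀ N : ℕ, N0 ≤ N → ∀ G : Fin N × Bool → E, (∀ ω, G ω ∈ K) →
      (∀ e : Fin N → Bool, (N : ℝ)⁻¹ • ∑ n : Fin N, G (n, e n) ∈ convexHull ℝ K) ∧
      ((2 ^ N : ℝ)⁻¹ • ∑ e : Fin N → Bool, ((N : ℝ)⁻¹ • ∑ n : Fin N, G (n, e n)) =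
        (2 * N : ℝ)⁻¹ • ∑ ω : Fin N × Bool, G ω) ∧
      ((Finset.univ.filter fun e : Fin N → Bool =>
          η ≤ ‖(N : ℝ)⁻¹ • ∑ n : Fin N, G (n, e n) -
            (2 * N : ℝ)⁻¹ • ∑ ω : Fin N × Bool, G ω‖).card : ℝ) / 2 ^ N ≤ ε := by
  obtain ⟨W, hW⟩ := exists_finset_forall_norm_half_smul_sub_sub_lt hK (half_pos hη)
  set C : ℝ := #W * ∑ w ∈ W, ‖w‖ ^ 2
  refine ⟨⌈4 * C / (η ^ 2 * ε)⌉₊ + 1, Nat.succ_pos _, fun N hN G hG => ⟨fun e => ?_, ?_, ?_⟩⟩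
  · have : Nonempty (Fin N) := ⟨⟨0, by omega⟩⟩
    simpa using inv_card_smul_sum_mem_convexHull fun n => hG (n, e n)
  · simpa using average_inv_card_smul_sum_apply G
  have hNpos : (0 : ℝ) < N := by exact_mod_cast (Nat.succ_pos _).trans_le hN
  have hNlarge : 4 * C < N * (η ^ 2 * ε) := by
    rw [← div_lt_iff₀ (by positivity)]
    exact (Nat.le_ceil _).trans_lt (by exact_mod_cast hN)
  have hbad (e : Fin N → Bool) :
      η ≤ ‖(N : ℝ)⁻¹ • ∑ n, G (n, e n) - (2 * N : ℝ)⁻¹ • ∑ ω, G ω‖ ↔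
        N * η ≤ ‖∑ n, boolSign (e n) • halfDiff G n‖ := by
    simpa [norm_smul, le_inv_mul_iff₀ hNpos] using
      congrArg (η ≤ ‖·‖) (inv_card_smul_sum_apply_sub_eq G e)
  have hcount := card_le_norm_sum_boolSign_smul_mul_sq_le W (v := halfDiff G) (t := N * η / 2)
    (fun n => (hW _ (hG _) _ (hG _)).imp fun _ h => ⟨h.1, h.2.le⟩) (by positivity)
  simp only [Fintype.card_fin, show (N : ℝ) * η / 2 + N * (η / 2) = N * η by ring,
    ← filter_congr fun e _ => hbad e] at hcount
  rw [div_le_iff₀ (by positivity)]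
  refine le_of_mul_le_mul_right (hcount.trans ?_) (by positivity : (0 : ℝ) < (N * η / 2) ^ 2)
  have h2N : (0 : ℝ) ≤ N * 2 ^ N := by positivity
  nlinarith [mul_le_mul_of_nonneg_right hNlarge.le h2N]

end
end

section
/- Let X be a Haar system space. For every dyadic interval I, the norms satisfy ‖χ_I‖_X · ‖χ_I‖_{X^*} = |I|, where ‖χ_I‖_{X^*} is the norm of the functional f ↦ ∫_I f on X. Consequently, setting μ_I = ‖χ_I‖_X^{-1} and ν_I = ‖χ_I‖_{X^*}^{-1}, the system (ν_L h_L, μ_L h_L)_{L∈D^+} is biorthogonal in X^* × X. -/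
open MeasureTheory Filter Set
open scoped ENNReal

noncomputable section
open Classical

/-- The dual norm `‖χ_s‖_{X*}` of the functional `f ↦ ∫_s f`, computed over the
(dense) span of the dyadic indicators. -/
def dualNorm (H : HaarSystemNorm) (s : Set ℝ) : ℝ :=
  sSup {r | ∃ f ∈ dyadicSpan, H.N f ≤ 1 ∧ r = ∫ x in s, f x}

/-!
Every element of the dyadic span is a step function `∑_{j < 2^m} v_j χ_{I_{m,j}}` of some level
`m`. Swapping the two halves of every dyadic interval of level `m - 1`, or flipping the sign of
a step function of level `n` away from one interval `I`, produces an equimeasurable function,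
hence one of the same norm. Averaging with it and using the triangle inequality shows that
passing to the block averages of a coarser level, and then keeping only the value on `I`, does
not increase the norm. Hence `|∫_I f| ‖χ_I‖ ≤ |I| ‖f‖`, with equality for `f = χ_I`, which
is `‖χ_I‖ ‖χ_I‖_* = |I|`. Biorthogonality then follows from the orthogonality of the Haar
system together with `∫ h_L² = |L|`: a Haar function is constant on every finer dyadic interval
other than its own, on which the finer Haar function has integral zero.
-/

lemma mem_dyI_iff {m j : ℕ} {x : ℝ} : x ∈ dyI m j ↔ 0 ≤ x ∧ ⌊x * 2 ^ m⌋₊ = j := by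
  have h2m : (0 : ℝ) < 2 ^ m := by positivity
  rw [dyI, Set.mem_Ico, div_le_iff₀ h2m, lt_div_iff₀ h2m]
  constructor
  · rintro ⟨hj, hj'⟩
    have hx : 0 ≤ x * 2 ^ m := (Nat.cast_nonneg j).trans hj
    exact ⟨nonneg_of_mul_nonneg_left hx h2m, (Nat.floor_eq_iff hx).2 ⟨hj, hj'⟩⟩
  · rintro ⟨hx, rfl⟩
    exact (Nat.floor_eq_iff (by positivity)).1 rfl

lemma floor_mul_two_pow_add_div (x : ℝ) (n d : ℕ) :
    ⌊x * 2 ^ (n + d)⌋₊ / 2 ^ d = ⌊x * 2 ^ n⌋₊ := by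
  rw [← Nat.floor_div_natCast, pow_add]
  push_cast
  rw [← mul_assoc, mul_div_assoc, div_self (by positivity), mul_one]

lemma eq_of_mem_dyI {m i j : ℕ} {x : ℝ} (hi : x ∈ dyI m i) (hj : x ∈ dyI m j) : i = j :=
  (mem_dyI_iff.1 hi).2.symm.trans (mem_dyI_iff.1 hj).2

lemma mem_dyI_div {n d j : ℕ} {x : ℝ} (hx : x ∈ dyI (n + d) j) : x ∈ dyI n (j / 2 ^ d) := by
  obtain ⟨hx0, rfl⟩ := mem_dyI_iff.1 hx
  exact mem_dyI_iff.2 ⟨hx0, (floor_mul_two_pow_add_div x n d).symm⟩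

lemma mem_dyI_iff_mem_children {n i : ℕ} {x : ℝ} :
    x ∈ dyI n i ↔ x ∈ dyI (n + 1) (2 * i) ∨ x ∈ dyI (n + 1) (2 * i + 1) := by
  simp only [mem_dyI_iff, ← floor_mul_two_pow_add_div x n 1, pow_one, ← and_or_left]
  exact and_congr_right fun _ => by omega

lemma dyI_subset_Ico {m j : ℕ} (hj : j < 2 ^ m) : dyI m j ⊆ Set.Ico 0 1 := by
  intro x hx
  rw [← zero_add m] at hx
  simpa [Nat.div_eq_of_lt hj, dyI] using mem_dyI_div hx

lemma exists_mem_dyI {x : ℝ} (hx : x ∈ Set.Ico (0 : ℝ) 1) (m : ℕ) :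
    ∃ j < 2 ^ m, x ∈ dyI m j := by
  refine ⟨⌊x * 2 ^ m⌋₊, ?_, mem_dyI_iff.2 ⟨hx.1, rfl⟩⟩
  have h2m : (0 : ℝ) < 2 ^ m := by positivity
  rw [Nat.floor_lt (by nlinarith [hx.1]), Nat.cast_pow, Nat.cast_two]
  nlinarith [hx.2]

lemma measurableSet_dyI (m j : ℕ) : MeasurableSet (dyI m j) := measurableSet_Ico

lemma volume_real_dyI (m j : ℕ) : volume.real (dyI m j) = 1 / 2 ^ m := by
  rw [dyI, Real.volume_real_Ico, ← sub_div, add_sub_cancel_left, max_eq_left (by positivity)]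

lemma indicator_dyI_mem_dyadicSpan {n i : ℕ} (hi : i < 2 ^ n) :
    (dyI n i).indicator (1 : ℝ → ℝ) ∈ dyadicSpan :=
  Submodule.subset_span ⟨n, i, hi, rfl⟩

lemma integrable_indicator_dyI_s12 (m j : ℕ) : Integrable ((dyI m j).indicator (1 : ℝ → ℝ)) :=
  (integrable_indicator_iff (measurableSet_dyI m j)).2 (integrableOn_const measure_Ico_lt_top.ne)

def stepFn (m : ℕ) : (ℕ → ℝ) →ₗ[ℝ] ℝ → ℝ :=
  ∑ j ∈ Finset.range (2 ^ m), (LinearMap.proj j).smulRight ((dyI m j).indicator 1)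

lemma stepFn_apply (m : ℕ) (v : ℕ → ℝ) :
    stepFn m v = ∑ j ∈ Finset.range (2 ^ m), v j • (dyI m j).indicator 1 := by
  simp [stepFn, LinearMap.sum_apply]

lemma stepFn_mem_dyadicSpan (m : ℕ) (v : ℕ → ℝ) : stepFn m v ∈ dyadicSpan := by
  rw [stepFn_apply]
  exact Submodule.sum_mem _ fun j hj =>
    Submodule.smul_mem _ _ (indicator_dyI_mem_dyadicSpan (Finset.mem_range.1 hj))

lemma stepFn_apply_of_mem {m j : ℕ} (hj : j < 2 ^ m) {x : ℝ} (hx : x ∈ dyI m j)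
    (v : ℕ → ℝ) : stepFn m v x = v j := by
  rw [stepFn_apply, Finset.sum_apply, Finset.sum_eq_single_of_mem j (Finset.mem_range.2 hj)]
  · simp [hx]
  · intro k _ hkj
    simp [Set.indicator_of_notMem (fun hk => hkj (eq_of_mem_dyI hk hx))]

lemma stepFn_apply_of_notMem {m : ℕ} {x : ℝ} (hx : x ∉ Set.Ico (0 : ℝ) 1)
    (v : ℕ → ℝ) : stepFn m v x = 0 := by
  rw [stepFn_apply, Finset.sum_apply]
  refine Finset.sum_eq_zero fun j hj => ?_
  simp [Set.indicator_of_notMem (fun h => hx (dyI_subset_Ico (Finset.mem_range.1 hj) h))]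

lemma stepFn_refine (m k : ℕ) (v : ℕ → ℝ) :
    stepFn m v = stepFn (m + k) (fun j => v (j / 2 ^ k)) := by
  funext x
  by_cases hx : x ∈ Set.Ico (0 : ℝ) 1
  · obtain ⟨j, hj, hxj⟩ := exists_mem_dyI hx (m + k)
    have hjk : j / 2 ^ k < 2 ^ m := Nat.div_lt_of_lt_mul (by rwa [← pow_add, add_comm])
    rw [stepFn_apply_of_mem hj hxj, stepFn_apply_of_mem hjk (mem_dyI_div hxj)]
  · rw [stepFn_apply_of_notMem hx, stepFn_apply_of_notMem hx]

lemma indicator_dyI_eq_stepFn {n i : ℕ} (hi : i < 2 ^ n) :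
    (dyI n i).indicator 1 = stepFn n (Pi.single i 1) := by
  rw [stepFn_apply, Finset.sum_eq_single_of_mem i (Finset.mem_range.2 hi)]
  · simp
  · intro j _ hji
    simp [hji]

lemma exists_eq_stepFn {f : ℝ → ℝ} (hf : f ∈ dyadicSpan) : ∃ m v, f = stepFn m v := by
  induction hf using Submodule.span_induction with
  | mem g hg =>
    obtain ⟨n, i, hi, rfl⟩ := hg
    exact ⟨n, _, indicator_dyI_eq_stepFn hi⟩
  | zero => exact ⟨0, 0, (map_zero _).symm⟩
  | add g g' _ _ hg hg' =>
    obtain ⟨m, v, rfl⟩ := hg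
    obtain ⟨m', v', rfl⟩ := hg'
    refine ⟨m + m', (fun j => v (j / 2 ^ m')) + (fun j => v' (j / 2 ^ m)), ?_⟩
    rw [map_add, ← stepFn_refine, add_comm m m', ← stepFn_refine]
  | smul c g _ hg =>
    obtain ⟨m, v, rfl⟩ := hg
    exact ⟨m, c • v, (map_smul _ _ _).symm⟩

/-- The average of `v` over the `2^d` indices `j` with `j / 2^d = i`, i.e. over the dyadic
subintervals of level `n + d` of an interval `I_{n,i}`. -/
def blockAvg (d : ℕ) (v : ℕ → ℝ) (i : ℕ) : ℝ :=
  (∑ l ∈ Finset.Ico (i * 2 ^ d) ((i + 1) * 2 ^ d), v l) / 2 ^ d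

lemma blockAvg_zero (v : ℕ → ℝ) : blockAvg 0 v = v := by
  funext i
  simp [blockAvg]

lemma blockAvg_one (v : ℕ → ℝ) : blockAvg 1 v = fun l => (v (2 * l) + v (2 * l + 1)) / 2 := by
  funext l
  rw [blockAvg, pow_one, show (l + 1) * 2 = 2 * l + 1 + 1 by ring,
    Finset.sum_Ico_succ_top (by omega), Finset.sum_Ico_succ_top (by omega), mul_comm l 2]
  simp

lemma sum_Ico_two_mul (v : ℕ → ℝ) {a b : ℕ} (hab : a ≤ b) :
    ∑ l ∈ Finset.Ico a b, (v (2 * l) + v (2 * l + 1))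
      = ∑ l ∈ Finset.Ico (2 * a) (2 * b), v l := by
  induction b, hab using Nat.le_induction with
  | base => simp
  | succ b hab ih =>
    rw [Finset.sum_Ico_succ_top hab, ih, show 2 * (b + 1) = 2 * b + 1 + 1 by ring,
      Finset.sum_Ico_succ_top (by omega), Finset.sum_Ico_succ_top (by omega), add_assoc]

lemma blockAvg_succ (d : ℕ) (v : ℕ → ℝ) :
    blockAvg (d + 1) v = blockAvg d (blockAvg 1 v) := by
  funext i
  rw [blockAvg_one]
  simp only [blockAvg, ← Finset.sum_div]
  rw [sum_Ico_two_mul v (Nat.mul_le_mul_right _ (Nat.le_add_right i 1)), div_div, pow_succ]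
  congr 2 <;> ring_nf

lemma setIntegral_dyI_stepFn {n i : ℕ} (hi : i < 2 ^ n) (d : ℕ) (v : ℕ → ℝ) :
    ∫ x in dyI n i, stepFn (n + d) v x = blockAvg d v i / 2 ^ n := by
  have hvol (j : ℕ) : volume.real (dyI (n + d) j ∩ dyI n i)
      = if j / 2 ^ d = i then 1 / 2 ^ (n + d) else 0 := by
    split_ifs with hj
    · rw [Set.inter_eq_left.2 fun x hx => hj ▸ mem_dyI_div hx, volume_real_dyI]
    · rw [Set.disjoint_iff_inter_eq_empty.1 ?_, measureReal_empty]
      exact Set.disjoint_left.2 fun x hx hx' => hj (eq_of_mem_dyI (mem_dyI_div hx) hx')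
  have hblock : (Finset.range (2 ^ (n + d))).filter (fun j => j / 2 ^ d = i)
      = Finset.Ico (i * 2 ^ d) ((i + 1) * 2 ^ d) := by
    have hd : 0 < 2 ^ d := by positivity
    have : i * 2 ^ d + 2 ^ d ≤ 2 ^ n * 2 ^ d := by
      simpa [add_one_mul] using Nat.mul_le_mul_right (2 ^ d) hi
    ext j
    simp only [Finset.mem_filter, Finset.mem_range, Finset.mem_Ico, Nat.div_eq_iff hd, pow_add,
      add_one_mul]
    omega
  simp only [stepFn_apply, Finset.sum_apply, Pi.smul_apply, smul_eq_mul]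
  rw [integral_finsetSum]
  · simp only [integral_const_mul, integral_indicator_one (measurableSet_dyI _ _),
      measureReal_restrict_apply (measurableSet_dyI _ _), hvol, mul_ite, mul_zero,
      ← Finset.sum_filter, hblock, ← Finset.sum_mul]
    rw [blockAvg, pow_add]
    ring
  · exact fun j _ => ((integrable_indicator_dyI_s12 _ j).const_mul _).integrableOn

lemma volume_setOf_lt_abs_stepFn (m : ℕ) (v : ℕ → ℝ) {t : ℝ} (ht : 0 ≤ t) :
    volume {x | t < |stepFn m v x|}
      = ((Finset.range (2 ^ m)).filter fun j => t < |v j|).card * ENNReal.ofReal (1 / 2 ^ m) := by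
  have hset : {x | t < |stepFn m v x|}
      = ⋃ j ∈ (Finset.range (2 ^ m)).filter (fun j => t < |v j|), dyI m j := by
    ext x
    simp only [Set.mem_ofPred_eq, Set.mem_iUnion, Finset.mem_filter, Finset.mem_range,
      exists_prop]
    constructor
    · intro hx
      have hx01 : x ∈ Set.Ico (0 : ℝ) 1 := by
        by_contra hx01
        rw [stepFn_apply_of_notMem hx01, abs_zero] at hx
        exact hx.not_ge ht
      obtain ⟨j, hj, hxj⟩ := exists_mem_dyI hx01 m
      exact ⟨j, ⟨hj, stepFn_apply_of_mem hj hxj v ▸ hx⟩, hxj⟩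
    · rintro ⟨j, ⟨hj, hvj⟩, hxj⟩
      rwa [stepFn_apply_of_mem hj hxj]
  rw [hset, measure_biUnion_finset (fun j _ k _ hjk => Set.disjoint_left.2 fun x hj hk =>
      hjk (eq_of_mem_dyI hj hk)) fun j _ => measurableSet_dyI m j]
  simp [dyI, Real.volume_Ico, ← sub_div]

namespace HaarSystemNorm

variable (H : HaarSystemNorm)

lemma N_stepFn_eq_of_abs_eq_comp {m : ℕ} {v w : ℕ → ℝ} (σ : ℕ → ℕ)
    (hσ : ∀ j < 2 ^ m, σ j < 2 ^ m) (hσσ : ∀ j < 2 ^ m, σ (σ j) = j)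
    (h : ∀ j < 2 ^ m, |w j| = |v (σ j)|) :
    H.N (stepFn m w) = H.N (stepFn m v) := by
  refine H.distrib_inv _ _ (stepFn_mem_dyadicSpan m w) (stepFn_mem_dyadicSpan m v) fun t => ?_
  rcases le_or_gt 0 t with ht | ht
  · rw [volume_setOf_lt_abs_stepFn m w ht, volume_setOf_lt_abs_stepFn m v ht]
    congr 2
    refine Finset.card_bij' (fun j _ => σ j) (fun j _ => σ j) ?_ ?_ ?_ ?_
    all_goals simp only [Finset.mem_filter, Finset.mem_range]
    · exact fun j hj => ⟨hσ j hj.1, h j hj.1 ▸ hj.2⟩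
    · exact fun j hj => ⟨hσ j hj.1, by rw [h _ (hσ j hj.1), hσσ j hj.1]; exact hj.2⟩
    · exact fun j hj => hσσ j hj.1
    · exact fun j hj => hσσ j hj.1
  · have huniv (u : ℕ → ℝ) : {x | t < |stepFn m u x|} = Set.univ :=
      Set.eq_univ_of_forall fun x => ht.trans_le (abs_nonneg _)
    rw [huniv, huniv]

lemma N_midpoint_le {f g : ℝ → ℝ} (hf : f ∈ dyadicSpan) (hg : g ∈ dyadicSpan) :
    H.N ((2⁻¹ : ℝ) • (f + g)) ≤ (H.N f + H.N g) / 2 := by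
  rw [H.smul_eq _ _ (add_mem hf hg), abs_of_pos (by norm_num)]
  linarith [H.add_le f g hf hg]

/-- The averaged step function is the midpoint of `stepFn (m + 1) v` and its reflection swapping
sibling intervals, which is equimeasurable with it. -/
lemma N_stepFn_blockAvg_one_le (m : ℕ) (v : ℕ → ℝ) :
    H.N (stepFn m (blockAvg 1 v)) ≤ H.N (stepFn (m + 1) v) := by
  set σ : ℕ → ℕ := fun j => if j % 2 = 0 then j + 1 else j - 1
  have hpow : 2 ^ (m + 1) = 2 * 2 ^ m := by ring
  have hswap : H.N (stepFn (m + 1) (v ∘ σ)) = H.N (stepFn (m + 1) v) :=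
    H.N_stepFn_eq_of_abs_eq_comp σ (fun j hj => by simp only [σ]; split_ifs <;> omega)
      (fun j hj => by simp only [σ]; split_ifs <;> omega) fun j _ => rfl
  have hmid : stepFn m (blockAvg 1 v)
      = (2⁻¹ : ℝ) • (stepFn (m + 1) v + stepFn (m + 1) (v ∘ σ)) := by
    rw [stepFn_refine m 1, ← map_add, ← map_smul]
    congr 1
    funext j
    obtain ⟨l, rfl | rfl⟩ := Nat.even_or_odd' j
    · have hσl : σ (2 * l) = 2 * l + 1 := by simp [σ]
      simp only [Pi.smul_apply, Pi.add_apply, Function.comp_apply, hσl, blockAvg_one, smul_eq_mul,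
        pow_one, Nat.mul_div_cancel_left l two_pos]
      ring
    · have hσl : σ (2 * l + 1) = 2 * l := by simp [σ]
      have hl : (2 * l + 1) / 2 = l := by omega
      simp only [Pi.smul_apply, Pi.add_apply, Function.comp_apply, hσl, blockAvg_one, smul_eq_mul,
        pow_one, hl]
      ring
  rw [hmid]
  refine (H.N_midpoint_le (stepFn_mem_dyadicSpan _ _) (stepFn_mem_dyadicSpan _ _)).trans ?_
  rw [hswap, add_self_div_two]

lemma N_stepFn_blockAvg_le (n d : ℕ) (v : ℕ → ℝ) :
    H.N (stepFn n (blockAvg d v)) ≤ H.N (stepFn (n + d) v) := by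
  induction d generalizing v with
  | zero => rw [blockAvg_zero, add_zero]
  | succ d ih =>
    rw [blockAvg_succ]
    exact (ih _).trans (H.N_stepFn_blockAvg_one_le (n + d) v)

/-- Flipping the signs of a step function away from `I_{n,i}` preserves its distribution, and
the midpoint of the two is `w_i χ_{I_{n,i}}`. -/
lemma abs_mul_N_indicator_le {n i : ℕ} (hi : i < 2 ^ n) (w : ℕ → ℝ) :
    |w i| * H.N ((dyI n i).indicator 1) ≤ H.N (stepFn n w) := by
  set w' : ℕ → ℝ := fun j => if j = i then w j else -w j
  have hflip : H.N (stepFn n w') = H.N (stepFn n w) :=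
    H.N_stepFn_eq_of_abs_eq_comp id (fun j hj => hj) (fun j _ => rfl)
      fun j _ => by simp only [w', id]; split_ifs <;> simp
  have hmid : w i • (dyI n i).indicator 1 = (2⁻¹ : ℝ) • (stepFn n w + stepFn n w') := by
    rw [indicator_dyI_eq_stepFn hi, ← map_smul, ← map_add, ← map_smul]
    congr 1
    funext j
    by_cases hj : j = i
    · simp only [w', hj, Pi.smul_apply, Pi.add_apply, Pi.single_eq_same, if_true, smul_eq_mul]
      ring
    · simp [w', hj]
  rw [← H.smul_eq _ _ (indicator_dyI_mem_dyadicSpan hi), hmid]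
  refine (H.N_midpoint_le (stepFn_mem_dyadicSpan _ _) (stepFn_mem_dyadicSpan _ _)).trans ?_
  rw [hflip, add_self_div_two]

lemma N_indicator_dyI_pos {n i : ℕ} (hi : i < 2 ^ n) : 0 < H.N ((dyI n i).indicator 1) := by
  refine (H.nonneg _).lt_of_ne fun h => ?_
  have hmem : (i : ℝ) / 2 ^ n ∈ dyI n i :=
    Set.left_mem_Ico.2 (div_lt_div_of_pos_right (lt_add_one _) (by positivity))
  simpa [hmem] using
    congrFun (H.eq_zero _ (indicator_dyI_mem_dyadicSpan hi) h.symm) ((i : ℝ) / 2 ^ n)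

lemma abs_setIntegral_dyI_mul_N_le {n i : ℕ} (hi : i < 2 ^ n) {f : ℝ → ℝ}
    (hf : f ∈ dyadicSpan) :
    |∫ x in dyI n i, f x| * H.N ((dyI n i).indicator 1) ≤ H.N f / 2 ^ n := by
  obtain ⟨m, v, rfl⟩ := exists_eq_stepFn hf
  rw [stepFn_refine m n, add_comm, setIntegral_dyI_stepFn hi, abs_div,
    abs_of_pos (by positivity : (0 : ℝ) < 2 ^ n), div_mul_eq_mul_div]
  exact div_le_div_of_nonneg_right
    ((H.abs_mul_N_indicator_le hi _).trans (H.N_stepFn_blockAvg_le n m _)) (by positivity)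

lemma dualNorm_dyI {n i : ℕ} (hi : i < 2 ^ n) :
    dualNorm H (dyI n i) = 1 / 2 ^ n / H.N ((dyI n i).indicator 1) := by
  have hN := H.N_indicator_dyI_pos hi
  have hmem := indicator_dyI_mem_dyadicSpan hi
  refine IsGreatest.csSup_eq ⟨⟨(H.N ((dyI n i).indicator 1))⁻¹ • (dyI n i).indicator 1,
    Submodule.smul_mem _ _ hmem, ?_, ?_⟩, ?_⟩
  · rw [H.smul_eq _ _ hmem, abs_of_pos (inv_pos.2 hN), inv_mul_cancel₀ hN.ne']
  · simp only [Pi.smul_apply, smul_eq_mul, integral_const_mul,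
      integral_indicator_one (measurableSet_dyI _ _),
      measureReal_restrict_apply (measurableSet_dyI _ _), Set.inter_self, volume_real_dyI]
    ring
  · rintro r ⟨f, hf, hNf, rfl⟩
    rw [le_div_iff₀ hN]
    calc (∫ x in dyI n i, f x) * H.N ((dyI n i).indicator 1)
        ≤ |∫ x in dyI n i, f x| * H.N ((dyI n i).indicator 1) := by gcongr; exact le_abs_self _
      _ ≤ H.N f / 2 ^ n := H.abs_setIntegral_dyI_mul_N_le hi hf
      _ ≤ 1 / 2 ^ n := by gcongr

lemma N_mul_dualNorm_dyI {n i : ℕ} (hi : i < 2 ^ n) :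
    H.N ((dyI n i).indicator 1) * dualNorm H (dyI n i) = 1 / 2 ^ n := by
  rw [H.dualNorm_dyI hi, mul_div_cancel₀ _ (H.N_indicator_dyI_pos hi).ne']

lemma N_mul_dualNorm_suppI {I : Option (ℕ × ℕ)} (hI : validIdx I) :
    H.N ((suppI I).indicator 1) * dualNorm H (suppI I) = lenI I := by
  rcases I with _ | ⟨n, i⟩
  · have h := H.N_mul_dualNorm_dyI (n := 0) (i := 0) one_pos
    rwa [show dyI 0 0 = Set.Ico 0 1 by simp [dyI], pow_zero, div_one] at h
  · exact H.N_mul_dualNorm_dyI hI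

end HaarSystemNorm

lemma haarFn_eq_indicator_sub (n i : ℕ) :
    haarFn n i = (dyI (n + 1) (2 * i)).indicator 1 - (dyI (n + 1) (2 * i + 1)).indicator 1 := by
  funext x
  by_cases h₁ : x ∈ dyI (n + 1) (2 * i)
  · have h₂ : x ∉ dyI (n + 1) (2 * i + 1) := fun h₂ => by
      have := eq_of_mem_dyI h₁ h₂
      omega
    simp [haarFn, h₁, h₂]
  · by_cases h₂ : x ∈ dyI (n + 1) (2 * i + 1) <;> simp [haarFn, h₁, h₂]

lemma integral_haarFn (n i : ℕ) : ∫ x, haarFn n i x = 0 := by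
  rw [haarFn_eq_indicator_sub, integral_sub' (integrable_indicator_dyI_s12 _ _)
    (integrable_indicator_dyI_s12 _ _), integral_indicator_one (measurableSet_dyI _ _),
    integral_indicator_one (measurableSet_dyI _ _), volume_real_dyI, volume_real_dyI, sub_self]

lemma haarFn_eq_zero_of_notMem {n i : ℕ} {x : ℝ} (hx : x ∉ dyI n i) : haarFn n i x = 0 := by
  rw [mem_dyI_iff_mem_children, not_or] at hx
  simp [haarFn, hx.1, hx.2]

lemma haarFn_mul_self (n i : ℕ) (x : ℝ) :
    haarFn n i x * haarFn n i x = (dyI n i).indicator 1 x := by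
  have h := @mem_dyI_iff_mem_children n i x
  by_cases h₁ : x ∈ dyI (n + 1) (2 * i) <;> by_cases h₂ : x ∈ dyI (n + 1) (2 * i + 1) <;>
    simp [haarFn, h₁, h₂, h]

lemma haarFn_of_mem_dyI_succ {n i k : ℕ} {x : ℝ} (hx : x ∈ dyI (n + 1) k) :
    haarFn n i x = if k = 2 * i then 1 else if k = 2 * i + 1 then -1 else 0 := by
  have hmem (j : ℕ) : x ∈ dyI (n + 1) j ↔ k = j := ⟨eq_of_mem_dyI hx, fun h => h ▸ hx⟩
  simp only [haarFn, hmem]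

lemma exists_haarFn_eqOn_dyI {n i m j : ℕ} (hnm : n ≤ m) (hne : (n, i) ≠ (m, j)) :
    ∃ c, ∀ x ∈ dyI m j, haarFn n i x = c := by
  rcases hnm.lt_or_eq with hlt | rfl
  · obtain ⟨d, rfl⟩ := Nat.exists_eq_add_of_lt hlt
    exact ⟨_, fun x hx => haarFn_of_mem_dyI_succ (mem_dyI_div (n := n + 1) (d := d) (j := j)
      (by rwa [add_right_comm] at hx))⟩
  · exact ⟨0, fun x hx => haarFn_eq_zero_of_notMem fun hx' =>
      hne (by rw [eq_of_mem_dyI hx' hx])⟩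

lemma integral_mul_haarFn_eq_zero {g : ℝ → ℝ} {m j : ℕ} {c : ℝ}
    (hg : ∀ x ∈ dyI m j, g x = c) : ∫ x, g x * haarFn m j x = 0 := by
  have hgc : (fun x => g x * haarFn m j x) = fun x => c * haarFn m j x := by
    funext x
    by_cases hx : x ∈ dyI m j
    · rw [hg x hx]
    · rw [haarFn_eq_zero_of_notMem hx, mul_zero, mul_zero]
  rw [hgc, integral_const_mul, integral_haarFn, mul_zero]

lemma integral_haarFn_mul_haarFn {n i m j : ℕ} (hnm : n ≤ m) (hne : (n, i) ≠ (m, j)) :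
    ∫ x, haarFn n i x * haarFn m j x = 0 :=
  (exists_haarFn_eqOn_dyI hnm hne).elim fun _ hc => integral_mul_haarFn_eq_zero hc

lemma integral_indicator_Ico_mul_haarFn {m j : ℕ} (hj : j < 2 ^ m) :
    ∫ x, (Set.Ico (0 : ℝ) 1).indicator 1 x * haarFn m j x = 0 :=
  integral_mul_haarFn_eq_zero fun _ hx => Set.indicator_of_mem (dyI_subset_Ico hj hx) _

lemma integral_haarP_mul_self (I : Option (ℕ × ℕ)) :
    ∫ x, haarP I x * haarP I x = lenI I := by
  rcases I with _ | ⟨n, i⟩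
  · have hsq (x : ℝ) : haarP none x * haarP none x = (Set.Ico (0 : ℝ) 1).indicator 1 x := by
      by_cases hx : x ∈ Set.Ico (0 : ℝ) 1 <;> simp [haarP, hx]
    simp [hsq, integral_indicator_one measurableSet_Ico, lenI]
  · simp only [haarP, lenI, haarFn_mul_self]
    rw [integral_indicator_one (measurableSet_dyI _ _), volume_real_dyI]

lemma integral_haarP_mul_haarP_of_ne {I J : Option (ℕ × ℕ)} (hI : validIdx I) (hJ : validIdx J)
    (hIJ : I ≠ J) : ∫ x, haarP I x * haarP J x = 0 := by
  rcases I with _ | ⟨n, i⟩ <;> rcases J with _ | ⟨m, j⟩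
  · exact absurd rfl hIJ
  · exact integral_indicator_Ico_mul_haarFn hJ
  · simpa only [haarP, mul_comm] using integral_indicator_Ico_mul_haarFn hI
  · rcases le_total n m with h | h
    · exact integral_haarFn_mul_haarFn h fun h' => hIJ (congrArg some h')
    · simpa only [haarP, mul_comm] using
        integral_haarFn_mul_haarFn h fun h' => hIJ (congrArg some h'.symm)

lemma lenI_pos (I : Option (ℕ × ℕ)) : 0 < lenI I := by
  rcases I with _ | ⟨n, i⟩ <;> simp [lenI]

theorem statement12 (H : HaarSystemNorm) :
    (∀ n i : ℕ, i < 2 ^ n →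
      H.N ((dyI n i).indicator 1) * dualNorm H (dyI n i) = 1 / 2 ^ n) ∧
    ∀ I J : Option (ℕ × ℕ), validIdx I → validIdx J →
      (dualNorm H (suppI I))⁻¹ * (H.N ((suppI J).indicator 1))⁻¹ *
          (∫ x, haarP I x * haarP J x) = if I = J then 1 else 0 := by
  refine ⟨fun n i hi => H.N_mul_dualNorm_dyI hi, fun I J hI hJ => ?_⟩
  split_ifs with hIJ
  · subst hIJ
    have hlen := H.N_mul_dualNorm_suppI hI
    rw [integral_haarP_mul_self, ← hlen, ← mul_inv_rev,
      inv_mul_cancel₀ (hlen ▸ (lenI_pos I).ne')]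
  · rw [integral_haarP_mul_haarP_of_ne hI hJ hIJ, mul_zero]

end
end
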